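/- Completeness criterion for s-semantics: let P be a finite definite program, S a set of atoms, and |·| : S → ℕ a level mapping (invariant under renaming). Suppose that for each A ∈ S there exist a clause C ∈ P and atoms A₁,…,Aₙ, each a variant of an atom in S, such that A ∈ T^π_{{C}}({A₁,…,Aₙ}) and |A| > |Aᵢ'| for atoms Aᵢ' ∈ S with Aᵢ a variant of Aᵢ'. Then S ⊆ O(P), i.e., S is contained in the least fixed point of T^π_P. -/

import Mathlib

/-- First-order terms over a signature with constants and a binary application,
    with variables indexed by naturals. -/
inductive Tm : Type
  | var : ℕ → Tm
  | const : ℕ → Tm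
  | app : Tm → Tm → Tm
deriving DecidableEq

/-- Applying a substitution (a map from variables to terms) to a term. -/
def Tm.subst (σ : ℕ → Tm) : Tm → Tm
  | .var x => σ x
  | .const c => .const c
  | .app s t => .app (s.subst σ) (t.subst σ)

/-- Composition of substitutions: first `θ`, then `δ`. -/
def Subst.comp (θ δ : ℕ → Tm) : ℕ → Tm := fun x => (θ x).subst δ

/-- A renaming is a substitution given by a bijection on variables. -/
def IsRenaming (γ : ℕ → Tm) : Prop :=
  ∃ f : ℕ → ℕ, Function.Bijective f ∧ γ = fun x => Tm.var (f x)

/-- `θ` unifies `s` and `t`. -/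
def IsUnifier (s t : Tm) (θ : ℕ → Tm) : Prop := s.subst θ = t.subst θ

/-- `θ` is a most general unifier of `s` and `t`: every unifier factors through it. -/
def IsMGU (s t : Tm) (θ : ℕ → Tm) : Prop :=
  IsUnifier s t θ ∧ ∀ σ, IsUnifier s t σ → ∃ δ, ∀ x, σ x = (θ x).subst δ

/-- The set of variables of a term. -/
def Tm.vars : Tm → Finset ℕ
  | .var x => {x}
  | .const _ => ∅
  | .app s t => s.vars ∪ t.vars

/-- A term is ground if it has no variables. -/
def Tm.Ground (t : Tm) : Prop := t.vars = ∅

/-- An atom `p(t₁,…,tₙ)`: a predicate symbol together with its argument list. -/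
structure Atom where
  pred : ℕ
  args : List Tm
deriving DecidableEq

/-- Applying a substitution to an atom. -/
def Atom.subst (θ : ℕ → Tm) (A : Atom) : Atom := ⟨A.pred, A.args.map (Tm.subst θ)⟩

/-- The variables of an atom. -/
def Atom.vars (A : Atom) : Finset ℕ := A.args.foldr (fun t s => t.vars ∪ s) ∅

/-- A definite clause `H ← B₁,…,Bₙ`. -/
structure Clause where
  head : Atom
  body : List Atom
deriving DecidableEq

/-- The variables of a clause. -/
def Clause.vars (C : Clause) : Finset ℕ :=
  C.head.vars ∪ C.body.foldr (fun a s => a.vars ∪ s) ∅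

/-- A (finite) definite program. -/
abbrev Program := Finset Clause

/-- `θ` unifies the tuples `(B₁,…,Bₙ)` and `(A₁,…,Aₙ)` of atoms. -/
def IsUnifierL (Bs As : List Atom) (θ : ℕ → Tm) : Prop :=
  Bs.map (Atom.subst θ) = As.map (Atom.subst θ)

/-- `θ` is an mgu of the tuples `(B₁,…,Bₙ)` and `(A₁,…,Aₙ)` of atoms. -/
def IsMGUL (Bs As : List Atom) (θ : ℕ → Tm) : Prop :=
  IsUnifierL Bs As θ ∧ ∀ σ, IsUnifierL Bs As σ → ∃ δ, ∀ x, σ x = (θ x).subst δ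

/-- The s-semantics immediate consequence operator `T^π_P`. -/
def Tpi (P : Program) (I : Set Atom) : Set Atom :=
  { A | ∃ C ∈ P, ∃ As : List Atom,
      As.length = C.body.length ∧ (∀ a ∈ As, a ∈ I) ∧
      (C.vars :: As.map Atom.vars).Pairwise Disjoint ∧
      ∃ θ, IsMGUL C.body As θ ∧ A = C.head.subst θ }

/-- `A'` is a variant of `A` (obtained from `A` by a renaming). -/
def IsVariant (A A' : Atom) : Prop := ∃ γ, IsRenaming γ ∧ A' = A.subst γ

/-!
Induction on the level: every atom of `S` of level `< i` lies in `(T^π_P)^i(∅)`. The atoms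
feeding the clause that produces `A` are variants of atoms of `S` of smaller level, and these
are already in `(T^π_P)^(i-1)(∅)` because each iterate is closed under renaming: composing an
mgu with a renaming gives again an mgu, the renaming being invertible.
-/

lemma Tm.subst_subst (θ δ : ℕ → Tm) (t : Tm) :
    (t.subst θ).subst δ = t.subst (Subst.comp θ δ) := by
  induction t <;> simp [Tm.subst, Subst.comp, *]

lemma Atom.subst_subst (θ δ : ℕ → Tm) (A : Atom) :
    (A.subst θ).subst δ = A.subst (Subst.comp θ δ) := by
  simp [Atom.subst, Function.comp_def, Tm.subst_subst]

lemma Atom.map_subst_comp (θ δ : ℕ → Tm) (As : List Atom) :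
    As.map (Atom.subst (Subst.comp θ δ)) = (As.map (Atom.subst θ)).map (Atom.subst δ) := by
  simp [Function.comp_def, Atom.subst_subst]

lemma IsRenaming.exists_leftInverse {γ : ℕ → Tm} (hγ : IsRenaming γ) :
    ∃ γ', ∀ t : Tm, (t.subst γ).subst γ' = t := by
  obtain ⟨f, hf, rfl⟩ := hγ
  obtain ⟨g, hgf, -⟩ := Function.bijective_iff_has_inverse.mp hf
  refine ⟨fun x => .var (g x), fun t => ?_⟩
  induction t <;> simp [Tm.subst, hgf _, *]

lemma IsUnifierL.comp {Bs As : List Atom} {θ : ℕ → Tm} (hθ : IsUnifierL Bs As θ)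
    (δ : ℕ → Tm) : IsUnifierL Bs As (Subst.comp θ δ) := by
  unfold IsUnifierL at hθ ⊢
  rw [Atom.map_subst_comp, Atom.map_subst_comp, hθ]

lemma IsMGUL.comp_renaming {Bs As : List Atom} {θ γ : ℕ → Tm} (hθ : IsMGUL Bs As θ)
    (hγ : IsRenaming γ) : IsMGUL Bs As (Subst.comp θ γ) := by
  obtain ⟨γ', hγ'⟩ := hγ.exists_leftInverse
  refine ⟨hθ.1.comp γ, fun σ hσ => ?_⟩
  obtain ⟨δ, hδ⟩ := hθ.2 σ hσ
  exact ⟨Subst.comp γ' δ, fun x => by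
    rw [hδ x, Subst.comp, ← Tm.subst_subst, hγ']⟩

lemma Tpi_of_isVariant {P : Program} {I : Set Atom} {A A' : Atom}
    (hA : A ∈ Tpi P I) (hAA' : IsVariant A A') : A' ∈ Tpi P I := by
  obtain ⟨γ, hγ, rfl⟩ := hAA'
  obtain ⟨C, hC, As, hlen, hmem, hdisj, θ, hθ, rfl⟩ := hA
  exact ⟨C, hC, As, hlen, hmem, hdisj, _, hθ.comp_renaming hγ, Atom.subst_subst θ γ C.head⟩

lemma iterate_Tpi_of_isVariant {P : Program} {n : ℕ} {A A' : Atom}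
    (hA : A ∈ (Tpi P)^[n] ∅) (hAA' : IsVariant A A') : A' ∈ (Tpi P)^[n] ∅ := by
  cases n with
  | zero => exact absurd hA (Set.notMem_empty A)
  | succ n =>
    rw [Function.iterate_succ_apply'] at hA ⊢
    exact Tpi_of_isVariant hA hAA'

lemma Tpi_mono {P P' : Program} {I I' : Set Atom} (hP : P ⊆ P') (hI : I ⊆ I') :
    Tpi P I ⊆ Tpi P' I' := by
  rintro A ⟨C, hC, As, hlen, hmem, hdisj, θ, hθ, rfl⟩
  exact ⟨C, hP hC, As, hlen, fun a ha => hI (hmem a ha), hdisj, θ, hθ, rfl⟩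

theorem completeness_criterion_general (P : Program) (S : Set Atom) (lvl : Atom → ℕ)
    (h : ∀ A ∈ S, ∃ C ∈ P, ∃ As : List Atom,
        (∀ Ai ∈ As, ∃ Ai' ∈ S, IsVariant Ai' Ai ∧ lvl Ai' < lvl A) ∧
        A ∈ Tpi {C} {a | a ∈ As}) :
    S ⊆ ⋃ n : ℕ, (Tpi P)^[n] ∅ := by
  suffices hlt : ∀ i, ∀ A ∈ S, lvl A < i → A ∈ (Tpi P)^[i] ∅ from
    fun A hA => Set.mem_iUnion.mpr ⟨lvl A + 1, hlt _ A hA (Nat.lt_succ_self _)⟩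
  intro i
  induction i with
  | zero => intro A _ hA; omega
  | succ i ih =>
    intro A hA hAi
    obtain ⟨C, hC, As, hAs, hAC⟩ := h A hA
    have hAs_mem : ∀ Ai ∈ As, Ai ∈ (Tpi P)^[i] ∅ := fun Ai hAi => by
      obtain ⟨Ai', hAi'S, hvar, hlvl⟩ := hAs Ai hAi
      exact iterate_Tpi_of_isVariant (ih Ai' hAi'S (by omega)) hvar
    rw [Function.iterate_succ_apply']
    exact Tpi_mono (Finset.singleton_subset_iff.mpr hC) hAs_mem hAC

/-- completeness criterion: if every `A ∈ S` is produced by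
    `T^π_{{C}}` for some clause `C ∈ P` from atoms that are variants of
    atoms of `S` of smaller level, then `S ⊆ O(P)`. -/
theorem completeness_criterion (P : Program) (S : Set Atom) (lvl : Atom → ℕ)
    (hlvl : ∀ A ∈ S, ∀ A' ∈ S, IsVariant A A' → lvl A = lvl A')
    (h : ∀ A ∈ S, ∃ C ∈ P, ∃ As : List Atom,
        (∀ Ai ∈ As, ∃ Ai' ∈ S, IsVariant Ai' Ai ∧ lvl Ai' < lvl A) ∧
        A ∈ Tpi {C} {a | a ∈ As}) :
    S ⊆ ⋃ n : ℕ, (Tpi P)^[n] ∅ :=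
  completeness_criterion_general P S lvl h
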